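/- Fix an integer n ≥ 4. On ℝ^{2n} with coordinates (x₁, …, x_n, ξ₁, …, ξ_n), define the Poisson bracket {f, g} = Σ_{j=1}^{n} (∂f/∂ξ_j · ∂g/∂x_j − ∂f/∂x_j · ∂g/∂ξ_j), and let p₁(x, ξ) = ξ_{n−1}, p₂(x, ξ) = ξ₁ x_{n−1}, p₃(x, ξ) = ξ_n + x_n² ξ₁. Then: (i) {p₁, p₃} = 0 and {p₂, p₃} = 0 identically, while {p₁, p₂} = ξ₁, which is nonvanishing at every point of Σ = {(x, ξ) : p₁ = p₂ = p₃ = 0, ξ₁ ≠ 0}; and (ii) at every point z ∈ Σ, the restriction of the standard symplectic bilinear form ω((u, μ), (v, ν)) = ⟨μ, v⟩ − ⟨u, ν⟩ to the tangent space T_z Σ has rank 2n−4, the maximal possible rank for a codimension-three submanifold of ℝ^{2n}. -/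

import Mathlib

/-- The phase space `T*ℝⁿ ≅ ℝ^{2n}`, with coordinates `x_j` (the `Sum.inl` indices)
and `ξ_j` (the `Sum.inr` indices). -/
abbrev Phase (n : ℕ) := (Fin n ⊕ Fin n) → ℝ

/-- The standard symplectic bilinear form `ω((u, μ), (v, ν)) = ⟨μ, v⟩ - ⟨u, ν⟩`. -/
noncomputable def sympForm (n : ℕ) : LinearMap.BilinForm ℝ (Phase n) :=
  LinearMap.mk₂ ℝ
    (fun z w => ∑ j : Fin n,
      (z (Sum.inr j) * w (Sum.inl j) - z (Sum.inl j) * w (Sum.inr j)))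
    (by
      intro m₁ m₂ w
      rw [← Finset.sum_add_distrib]
      exact Finset.sum_congr rfl fun j _ => by simp [Pi.add_apply]; ring)
    (by
      intro c m w
      rw [Finset.smul_sum]
      exact Finset.sum_congr rfl fun j _ => by simp [Pi.smul_apply, smul_eq_mul]; ring)
    (by
      intro m w₁ w₂
      rw [← Finset.sum_add_distrib]
      exact Finset.sum_congr rfl fun j _ => by simp [Pi.add_apply]; ring)
    (by
      intro c m w
      rw [Finset.smul_sum]
      exact Finset.sum_congr rfl fun j _ => by simp [Pi.smul_apply, smul_eq_mul]; ring)

/-- The Poisson bracket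
`{f, g} = ∑_j ∂f/∂ξ_j ∂g/∂x_j - ∂f/∂x_j ∂g/∂ξ_j` on `ℝ^{2n}`. -/
noncomputable def poissonBracket (n : ℕ) (f g : Phase n → ℝ) (z : Phase n) : ℝ :=
  ∑ j : Fin n,
    (fderiv ℝ f z (Pi.single (Sum.inr j) 1) * fderiv ℝ g z (Pi.single (Sum.inl j) 1) -
      fderiv ℝ f z (Pi.single (Sum.inl j) 1) * fderiv ℝ g z (Pi.single (Sum.inr j) 1))

/-- `p₁ = ξ_{n-1}`. -/
noncomputable def p1 (n : ℕ) (hn : 4 ≤ n) (z : Phase n) : ℝ :=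
  z (Sum.inr ⟨n - 2, by omega⟩)

/-- `p₂ = ξ₁ x_{n-1}`. -/
noncomputable def p2 (n : ℕ) (hn : 4 ≤ n) (z : Phase n) : ℝ :=
  z (Sum.inr ⟨0, by omega⟩) * z (Sum.inl ⟨n - 2, by omega⟩)

/-- `p₃ = ξ_n + x_n² ξ₁`. -/
noncomputable def p3 (n : ℕ) (hn : 4 ≤ n) (z : Phase n) : ℝ :=
  z (Sum.inr ⟨n - 1, by omega⟩) +
    (z (Sum.inl ⟨n - 1, by omega⟩)) ^ 2 * z (Sum.inr ⟨0, by omega⟩)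

lemma hd_coord {n : ℕ} (i : Fin n ⊕ Fin n) (z : Phase n) :
    HasFDerivAt (fun w : Phase n => w i) (ContinuousLinearMap.proj (R := ℝ) i) z := by
  exact ContinuousLinearMap.hasFDerivAt
    (ContinuousLinearMap.proj (R := ℝ) (φ := fun _ : Fin n ⊕ Fin n => ℝ) i)

lemma hasFD_p1 {n : ℕ} (hn : 4 ≤ n) (z : Phase n) :
    HasFDerivAt (p1 n hn)
      (ContinuousLinearMap.proj (R := ℝ) (Sum.inr (⟨n - 2, by omega⟩ : Fin n))) z :=
  hd_coord _ z

lemma hasFD_p2 {n : ℕ} (hn : 4 ≤ n) (z : Phase n) :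
    HasFDerivAt (p2 n hn)
      (z (Sum.inr ⟨0, by omega⟩) •
          ContinuousLinearMap.proj (R := ℝ) (Sum.inl (⟨n - 2, by omega⟩ : Fin n)) +
        z (Sum.inl ⟨n - 2, by omega⟩) •
          ContinuousLinearMap.proj (R := ℝ) (Sum.inr (⟨0, by omega⟩ : Fin n))) z :=
  (hd_coord _ z).mul (hd_coord _ z)

lemma hasFD_p3 {n : ℕ} (hn : 4 ≤ n) (z : Phase n) :
    HasFDerivAt (p3 n hn)
      (ContinuousLinearMap.proj (R := ℝ) (Sum.inr (⟨n - 1, by omega⟩ : Fin n)) +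
        ((z (Sum.inl ⟨n - 1, by omega⟩) * z (Sum.inl ⟨n - 1, by omega⟩)) •
            ContinuousLinearMap.proj (R := ℝ) (Sum.inr (⟨0, by omega⟩ : Fin n)) +
          z (Sum.inr ⟨0, by omega⟩) •
            (z (Sum.inl ⟨n - 1, by omega⟩) •
                ContinuousLinearMap.proj (R := ℝ) (Sum.inl (⟨n - 1, by omega⟩ : Fin n)) +
              z (Sum.inl ⟨n - 1, by omega⟩) •
                ContinuousLinearMap.proj (R := ℝ) (Sum.inl (⟨n - 1, by omega⟩ : Fin n))))) z := by
  have h : HasFDerivAt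
      (fun w : Phase n => w (Sum.inr ⟨n - 1, by omega⟩) +
        w (Sum.inl ⟨n - 1, by omega⟩) * w (Sum.inl ⟨n - 1, by omega⟩) * w (Sum.inr ⟨0, by omega⟩))
      _ z :=
    (hd_coord _ z).add (((hd_coord (Sum.inl ⟨n - 1, by omega⟩) z).mul (hd_coord _ z)).mul
      (hd_coord (Sum.inr ⟨0, by omega⟩) z))
  have e : p3 n hn = fun w : Phase n => w (Sum.inr ⟨n - 1, by omega⟩) +
      w (Sum.inl ⟨n - 1, by omega⟩) * w (Sum.inl ⟨n - 1, by omega⟩) * w (Sum.inr ⟨0, by omega⟩) := by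
    funext w; simp only [p3]; ring
  rw [e]
  exact h

lemma fd_p1 {n : ℕ} (hn : 4 ≤ n) (z v : Phase n) :
    fderiv ℝ (p1 n hn) z v = v (Sum.inr ⟨n - 2, by omega⟩) := by
  rw [(hasFD_p1 hn z).fderiv]; rfl

lemma fd_p2 {n : ℕ} (hn : 4 ≤ n) (z v : Phase n) :
    fderiv ℝ (p2 n hn) z v =
      z (Sum.inr ⟨0, by omega⟩) * v (Sum.inl ⟨n - 2, by omega⟩) +
        z (Sum.inl ⟨n - 2, by omega⟩) * v (Sum.inr ⟨0, by omega⟩) := by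
  rw [(hasFD_p2 hn z).fderiv]
  simp [ContinuousLinearMap.proj_apply]

lemma fd_p3 {n : ℕ} (hn : 4 ≤ n) (z v : Phase n) :
    fderiv ℝ (p3 n hn) z v =
      v (Sum.inr ⟨n - 1, by omega⟩) +
        z (Sum.inl ⟨n - 1, by omega⟩) * z (Sum.inl ⟨n - 1, by omega⟩) * v (Sum.inr ⟨0, by omega⟩) +
        2 * z (Sum.inr ⟨0, by omega⟩) * z (Sum.inl ⟨n - 1, by omega⟩) * v (Sum.inl ⟨n - 1, by omega⟩) := by
  rw [(hasFD_p3 hn z).fderiv]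
  simp [ContinuousLinearMap.proj_apply]
  ring

lemma br13 {n : ℕ} (hn : 4 ≤ n) (z : Phase n) :
    poissonBracket n (p1 n hn) (p3 n hn) z = 0 := by
  unfold poissonBracket
  apply Finset.sum_eq_zero
  intro j _
  simp only [fd_p1 hn, fd_p3 hn, Pi.single_apply, Sum.inr.injEq, Sum.inl.injEq,
    reduceCtorEq, if_false, Fin.mk.injEq]
  split_ifs
  all_goals try ring
  all_goals (exfalso; simp only [Fin.ext_iff] at *; omega)

lemma br23 {n : ℕ} (hn : 4 ≤ n) (z : Phase n) :
    poissonBracket n (p2 n hn) (p3 n hn) z = 0 := by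
  unfold poissonBracket
  apply Finset.sum_eq_zero
  intro j _
  simp only [fd_p2 hn, fd_p3 hn, Pi.single_apply, Sum.inr.injEq, Sum.inl.injEq,
    reduceCtorEq, if_false, Fin.mk.injEq]
  split_ifs
  all_goals try ring
  all_goals (exfalso; simp only [Fin.ext_iff] at *; omega)

lemma br12 {n : ℕ} (hn : 4 ≤ n) (z : Phase n) :
    poissonBracket n (p1 n hn) (p2 n hn) z = z (Sum.inr ⟨0, by omega⟩) := by
  unfold poissonBracket
  rw [Finset.sum_eq_single (⟨n - 2, by omega⟩ : Fin n)]
  · simp only [fd_p1 hn, fd_p2 hn, Pi.single_apply, Sum.inr.injEq, Sum.inl.injEq,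
      reduceCtorEq, if_false, Fin.mk.injEq]
    split_ifs
    all_goals try ring
    all_goals (exfalso; simp only [Fin.ext_iff] at *; omega)
  · intro b _ hb
    simp only [fd_p1 hn, fd_p2 hn, Pi.single_apply, Sum.inr.injEq, Sum.inl.injEq,
      reduceCtorEq, if_false, Fin.mk.injEq]
    have hb' : ¬ ((b : ℕ) = n - 2) := by simpa [Fin.ext_iff] using hb
    split_ifs
    all_goals try ring
    all_goals (exfalso; simp only [Fin.ext_iff] at *; omega)
  · intro h
    exact absurd (Finset.mem_univ _) h
lemma sympForm_apply {n : ℕ} (v u : Phase n) :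
    sympForm n v u = ∑ j : Fin n,
      (v (Sum.inr j) * u (Sum.inl j) - v (Sum.inl j) * u (Sum.inr j)) := rfl

/-- sum of a function supported at two points -/
lemma sum_two {n : ℕ} (j0 j1 : Fin n) (h : j0 ≠ j1) (f : Fin n → ℝ) (c0 c1 : ℝ)
    (hf : ∀ j, f j = (if j = j0 then c0 else 0) + (if j = j1 then c1 else 0)) :
    ∑ j : Fin n, f j = c0 + c1 := by
  simp [hf, Finset.sum_add_distrib]

/-- The explicit total derivative of the defining map on Σ. -/
noncomputable def Lmap (n : ℕ) (hn : 4 ≤ n) (z : Phase n) : Phase n →L[ℝ] ℝ × ℝ × ℝ :=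
  ContinuousLinearMap.prod
    (ContinuousLinearMap.proj (R := ℝ) (Sum.inr (⟨n - 2, by omega⟩ : Fin n)))
    (ContinuousLinearMap.prod (z (Sum.inr ⟨0, by omega⟩) •
          ContinuousLinearMap.proj (R := ℝ) (Sum.inl (⟨n - 2, by omega⟩ : Fin n)) +
        z (Sum.inl ⟨n - 2, by omega⟩) •
          ContinuousLinearMap.proj (R := ℝ) (Sum.inr (⟨0, by omega⟩ : Fin n)))
      (ContinuousLinearMap.proj (R := ℝ) (Sum.inr (⟨n - 1, by omega⟩ : Fin n)) +
        ((z (Sum.inl ⟨n - 1, by omega⟩) * z (Sum.inl ⟨n - 1, by omega⟩)) •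
            ContinuousLinearMap.proj (R := ℝ) (Sum.inr (⟨0, by omega⟩ : Fin n)) +
          z (Sum.inr ⟨0, by omega⟩) •
            (z (Sum.inl ⟨n - 1, by omega⟩) •
                ContinuousLinearMap.proj (R := ℝ) (Sum.inl (⟨n - 1, by omega⟩ : Fin n)) +
              z (Sum.inl ⟨n - 1, by omega⟩) •
                ContinuousLinearMap.proj (R := ℝ) (Sum.inl (⟨n - 1, by omega⟩ : Fin n))))))

lemma hasFD_triple {n : ℕ} (hn : 4 ≤ n) (z : Phase n) :
    HasFDerivAt (fun w : Phase n => ((p1 n hn w, p2 n hn w, p3 n hn w) : ℝ × ℝ × ℝ))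
      (Lmap n hn z) z :=
  (hasFD_p1 hn z).prodMk ((hasFD_p2 hn z).prodMk (hasFD_p3 hn z))

lemma Lmap_apply {n : ℕ} (hn : 4 ≤ n) (z v : Phase n) :
    Lmap n hn z v =
      (v (Sum.inr ⟨n - 2, by omega⟩),
       z (Sum.inr ⟨0, by omega⟩) * v (Sum.inl ⟨n - 2, by omega⟩) +
         z (Sum.inl ⟨n - 2, by omega⟩) * v (Sum.inr ⟨0, by omega⟩),
       v (Sum.inr ⟨n - 1, by omega⟩) +
         z (Sum.inl ⟨n - 1, by omega⟩) * z (Sum.inl ⟨n - 1, by omega⟩) * v (Sum.inr ⟨0, by omega⟩) +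
         z (Sum.inr ⟨0, by omega⟩) * (z (Sum.inl ⟨n - 1, by omega⟩) * v (Sum.inl ⟨n - 1, by omega⟩) +
           z (Sum.inl ⟨n - 1, by omega⟩) * v (Sum.inl ⟨n - 1, by omega⟩))) := by
  simp [Lmap, ContinuousLinearMap.prod_apply, ContinuousLinearMap.add_apply,
    ContinuousLinearMap.smul_apply, ContinuousLinearMap.proj_apply, smul_eq_mul]
  ring

/-- the radical generator -/
noncomputable def w0 (n : ℕ) (hn : 4 ≤ n) (z : Phase n) : Phase n := fun i =>
  if i = Sum.inl (⟨0, by omega⟩ : Fin n) then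
    z (Sum.inl ⟨n - 1, by omega⟩) * z (Sum.inl ⟨n - 1, by omega⟩)
  else if i = Sum.inl (⟨n - 1, by omega⟩ : Fin n) then 1
  else if i = Sum.inr (⟨n - 1, by omega⟩ : Fin n) then
    -(2 * z (Sum.inr ⟨0, by omega⟩) * z (Sum.inl ⟨n - 1, by omega⟩)) else 0

section main

variable {n : ℕ} (hn : 4 ≤ n) (z : Phase n)
  (h1 : p1 n hn z = 0) (h2 : p2 n hn z = 0) (h3 : p3 n hn z = 0)
  (hb : z (Sum.inr ⟨0, by omega⟩) ≠ 0)

include hn hb h2 in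
lemma zc_eq : z (Sum.inl ⟨n - 2, by omega⟩) = 0 := by
  have := h2
  simp only [p2, mul_eq_zero] at this
  exact this.resolve_left hb

include hn h2 hb in
lemma mem_ker_Lmap (v : Phase n) :
    v ∈ LinearMap.ker (Lmap n hn z : Phase n →ₗ[ℝ] ℝ × ℝ × ℝ) ↔
      (v (Sum.inr ⟨n - 2, by omega⟩) = 0 ∧ v (Sum.inl ⟨n - 2, by omega⟩) = 0 ∧
        v (Sum.inr ⟨n - 1, by omega⟩) =
          -(z (Sum.inl ⟨n - 1, by omega⟩) * z (Sum.inl ⟨n - 1, by omega⟩) *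
              v (Sum.inr ⟨0, by omega⟩)) -
            2 * z (Sum.inr ⟨0, by omega⟩) * z (Sum.inl ⟨n - 1, by omega⟩) *
              v (Sum.inl ⟨n - 1, by omega⟩)) := by
  rw [LinearMap.mem_ker, ContinuousLinearMap.coe_coe]
  rw [show (Lmap n hn z) v = _ from Lmap_apply hn z v, Prod.mk_eq_zero, Prod.mk_eq_zero,
    zc_eq hn z h2 hb]
  constructor
  · rintro ⟨ha, hc, hd⟩
    have hc' : v (Sum.inl ⟨n - 2, by omega⟩) = 0 := by
      rcases mul_eq_zero.mp (by linarith [hc] : z (Sum.inr ⟨0, by omega⟩) *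
        v (Sum.inl ⟨n - 2, by omega⟩) = 0) with h | h
      · exact absurd h hb
      · exact h
    exact ⟨ha, hc', by linear_combination hd⟩
  · rintro ⟨ha, hc, hd⟩
    exact ⟨ha, by rw [hc]; ring, by linear_combination hd⟩

include hn h2 hb in
lemma surj_Lmap : Function.Surjective (Lmap n hn z) := by
  rintro ⟨r, s, t⟩
  refine ⟨fun i => if i = Sum.inr (⟨n - 2, by omega⟩ : Fin n) then r
    else if i = Sum.inl (⟨n - 2, by omega⟩ : Fin n) then s / z (Sum.inr ⟨0, by omega⟩)
    else if i = Sum.inr (⟨n - 1, by omega⟩ : Fin n) then t else 0, ?_⟩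
  have e1 : ¬((0 : ℕ) = n - 2) := by omega
  have e2 : ¬((0 : ℕ) = n - 1) := by omega
  have e3 : ¬((n - 1 : ℕ) = n - 2) := by omega
  rw [Lmap_apply hn]
  simp only [Sum.inr.injEq, Sum.inl.injEq, Fin.mk.injEq, reduceCtorEq, if_true, if_false,
    if_neg e1, if_neg e2, if_neg e3, ite_self]
  rw [zc_eq hn z h2 hb]
  refine Prod.ext rfl (Prod.ext ?_ ?_) <;> simp <;> field_simp

include hn h2 hb in
lemma finrank_ker_Lmap : Module.finrank ℝ (LinearMap.ker (Lmap n hn z : Phase n →ₗ[ℝ] ℝ × ℝ × ℝ)) = 2 * n - 3 := by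
  have h5 := LinearMap.finrank_range_add_finrank_ker ((Lmap n hn z) : Phase n →ₗ[ℝ] ℝ × ℝ × ℝ)
  have hrange : LinearMap.range ((Lmap n hn z) : Phase n →ₗ[ℝ] ℝ × ℝ × ℝ) = ⊤ :=
    LinearMap.range_eq_top.mpr (surj_Lmap hn z h2 hb)
  rw [hrange] at h5
  have hker : LinearMap.ker ((Lmap n hn z) : Phase n →ₗ[ℝ] ℝ × ℝ × ℝ) =
      LinearMap.ker (Lmap n hn z : Phase n →ₗ[ℝ] ℝ × ℝ × ℝ) := rfl
  rw [hker] at h5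
  have hdom : Module.finrank ℝ (Phase n) = 2 * n := by
    rw [Module.finrank_fintype_fun_eq_card]
    simp [Fintype.card_sum]
    omega
  rw [finrank_top, hdom] at h5
  have h3 : Module.finrank ℝ (ℝ × ℝ × ℝ) = 3 := by
    simp [Module.finrank_prod]
  rw [h3] at h5
  omega

include hn h2 hb in
lemma w0_mem : w0 n hn z ∈ LinearMap.ker (Lmap n hn z : Phase n →ₗ[ℝ] ℝ × ℝ × ℝ) := by
  rw [mem_ker_Lmap hn z h2 hb]
  have e1 : ¬((n - 2 : ℕ) = 0) := by omega
  have e2 : ¬((n - 2 : ℕ) = n - 1) := by omega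
  have e3 : ¬((0 : ℕ) = n - 1) := by omega
  have e1' : ¬((0 : ℕ) = n - 2) := by omega
  have e2' : ¬((n - 1 : ℕ) = n - 2) := by omega
  have e3' : ¬((n - 1 : ℕ) = 0) := by omega
  refine ⟨?_, ?_, ?_⟩ <;>
    simp only [w0, Sum.inr.injEq, Sum.inl.injEq, Fin.mk.injEq, reduceCtorEq, if_true, if_false,
      if_neg e1, if_neg e2, if_neg e3, if_neg e1', if_neg e2', if_neg e3', ite_self, if_pos] <;>
    ring

include hn h2 hb in
lemma omega_w0 (u : Phase n) (hu : u ∈ LinearMap.ker (Lmap n hn z : Phase n →ₗ[ℝ] ℝ × ℝ × ℝ)) :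
    sympForm n (w0 n hn z) u = 0 := by
  have E01 : ¬((0 : ℕ) = n - 1) := by omega
  have E10 : ¬((n - 1 : ℕ) = 0) := by omega
  have hne : (⟨0, by omega⟩ : Fin n) ≠ ⟨n - 1, by omega⟩ := by
    simp [Fin.ext_iff]; omega
  have hpt : ∀ j : Fin n,
      w0 n hn z (Sum.inr j) * u (Sum.inl j) - w0 n hn z (Sum.inl j) * u (Sum.inr j) =
        (if j = (⟨0, by omega⟩ : Fin n) then
          -(z (Sum.inl ⟨n - 1, by omega⟩) * z (Sum.inl ⟨n - 1, by omega⟩) *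
            u (Sum.inr ⟨0, by omega⟩)) else 0) +
        (if j = (⟨n - 1, by omega⟩ : Fin n) then
          (-(2 * z (Sum.inr ⟨0, by omega⟩) * z (Sum.inl ⟨n - 1, by omega⟩)) *
            u (Sum.inl ⟨n - 1, by omega⟩) - u (Sum.inr ⟨n - 1, by omega⟩)) else 0) := by
    intro j
    by_cases hj0 : j = (⟨0, by omega⟩ : Fin n)
    · subst hj0
      simp only [w0, Sum.inr.injEq, Sum.inl.injEq, Fin.mk.injEq, reduceCtorEq, E01, E10,
        eq_self_iff_true, if_true, if_false, ite_true, ite_false, hne, if_neg hne]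
      ring
    · by_cases hj1 : j = (⟨n - 1, by omega⟩ : Fin n)
      · subst hj1
        simp only [w0, Sum.inr.injEq, Sum.inl.injEq, Fin.mk.injEq, reduceCtorEq, E01, E10,
          eq_self_iff_true, if_true, if_false, ite_true, ite_false, if_neg hne.symm]
        ring
      · simp only [w0, Sum.inr.injEq, Sum.inl.injEq, Fin.mk.injEq, reduceCtorEq,
          if_false, if_neg hj0, if_neg hj1]
        ring
  rw [sympForm_apply, sum_two _ _ hne _ _ _ hpt]
  have hu' := (mem_ker_Lmap hn z h2 hb u).mp hu
  linear_combination (-1 : ℝ) * hu'.2.2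

include hn h2 hb in
lemma ker_B_eq :
    LinearMap.ker ((sympForm n).compl₁₂ (LinearMap.ker (Lmap n hn z : Phase n →ₗ[ℝ] ℝ × ℝ × ℝ)).subtype
        (LinearMap.ker (Lmap n hn z : Phase n →ₗ[ℝ] ℝ × ℝ × ℝ)).subtype) =
      Submodule.span ℝ {(⟨w0 n hn z, w0_mem hn z h2 hb⟩ :
        LinearMap.ker (Lmap n hn z : Phase n →ₗ[ℝ] ℝ × ℝ × ℝ))} := by
  have E01 : ¬((0 : ℕ) = n - 1) := by omega
  have E10 : ¬((n - 1 : ℕ) = 0) := by omega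
  have E02 : ¬((0 : ℕ) = n - 2) := by omega
  have E20 : ¬((n - 2 : ℕ) = 0) := by omega
  have E12 : ¬((n - 1 : ℕ) = n - 2) := by omega
  have E21 : ¬((n - 2 : ℕ) = n - 1) := by omega
  apply le_antisymm
  · intro v hv
    rw [LinearMap.mem_ker] at hv
    have hvmem := (mem_ker_Lmap hn z h2 hb v.1).mp v.2
    -- ξ-coordinates vanish away from n-2, n-1
    have hvr : ∀ j : Fin n, ¬((j : ℕ) = n - 2) → ¬((j : ℕ) = n - 1) →
        v.1 (Sum.inr j) = 0 := by
      intro j hj2 hj1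
      have h2' : (⟨n - 2, by omega⟩ : Fin n) ≠ j := by simp [Fin.ext_iff]; omega
      have h1' : (⟨n - 1, by omega⟩ : Fin n) ≠ j := by simp [Fin.ext_iff]; omega
      have huK : (Pi.single (Sum.inl j) 1 : Phase n) ∈ LinearMap.ker (Lmap n hn z : Phase n →ₗ[ℝ] ℝ × ℝ × ℝ) := by
        rw [mem_ker_Lmap hn z h2 hb]
        refine ⟨by simp [Pi.single_apply], ?_, ?_⟩
        · simp [Pi.single_apply, h2']
        · simp [Pi.single_apply, h1']
      have h0 := DFunLike.congr_fun hv ⟨_, huK⟩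
      simpa [LinearMap.compl₁₂_apply, sympForm_apply, Pi.single_apply] using h0
    -- x-coordinates vanish away from 0, n-2, n-1
    have hvl : ∀ j : Fin n, ¬((j : ℕ) = 0) → ¬((j : ℕ) = n - 2) → ¬((j : ℕ) = n - 1) →
        v.1 (Sum.inl j) = 0 := by
      intro j hj0 hj2 hj1
      have h0' : (⟨0, by omega⟩ : Fin n) ≠ j := by simp [Fin.ext_iff]; omega
      have h2' : (⟨n - 2, by omega⟩ : Fin n) ≠ j := by simp [Fin.ext_iff]; omega
      have h1' : (⟨n - 1, by omega⟩ : Fin n) ≠ j := by simp [Fin.ext_iff]; omega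
      have huK : (Pi.single (Sum.inr j) 1 : Phase n) ∈ LinearMap.ker (Lmap n hn z : Phase n →ₗ[ℝ] ℝ × ℝ × ℝ) := by
        rw [mem_ker_Lmap hn z h2 hb]
        refine ⟨by simp [Pi.single_apply, h2'], by simp [Pi.single_apply], ?_⟩
        · simp [Pi.single_apply, h1', h0']
      have h0 := DFunLike.congr_fun hv ⟨_, huK⟩
      have := h0
      simp only [LinearMap.compl₁₂_apply, Submodule.subtype_apply, sympForm_apply,
        LinearMap.zero_apply] at this
      have hsum : ∑ k : Fin n, (v.1 (Sum.inr k) * (Pi.single (Sum.inr j) 1 : Phase n) (Sum.inl k) -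
          v.1 (Sum.inl k) * (Pi.single (Sum.inr j) 1 : Phase n) (Sum.inr k)) =
          -(v.1 (Sum.inl j)) := by
        simp [Pi.single_apply]
      rw [hsum] at this
      linarith
    -- the relation between x_1 and x_n coordinates
    have hv0 : v.1 (Sum.inl ⟨0, by omega⟩) =
        z (Sum.inl ⟨n - 1, by omega⟩) * z (Sum.inl ⟨n - 1, by omega⟩) *
          v.1 (Sum.inl ⟨n - 1, by omega⟩) := by
      set u3 : Phase n := fun i =>
        if i = Sum.inr (⟨0, by omega⟩ : Fin n) then 1
        else if i = Sum.inr (⟨n - 1, by omega⟩ : Fin n) then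
          -(z (Sum.inl ⟨n - 1, by omega⟩) * z (Sum.inl ⟨n - 1, by omega⟩)) else 0 with hu3
      have hu3K : u3 ∈ LinearMap.ker (Lmap n hn z : Phase n →ₗ[ℝ] ℝ × ℝ × ℝ) := by
        rw [mem_ker_Lmap hn z h2 hb]
        refine ⟨?_, ?_, ?_⟩ <;>
          simp only [hu3, Sum.inr.injEq, Sum.inl.injEq, Fin.mk.injEq, reduceCtorEq,
            E01, E10, E02, E20, E12, E21, eq_self_iff_true, if_true, if_false,
            ite_true, ite_false] <;>
          ring
      have h0 := DFunLike.congr_fun hv ⟨_, hu3K⟩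
      simp only [LinearMap.compl₁₂_apply, Submodule.subtype_apply, sympForm_apply,
        LinearMap.zero_apply] at h0
      have hne : (⟨0, by omega⟩ : Fin n) ≠ ⟨n - 1, by omega⟩ := by
        simp [Fin.ext_iff]; omega
      have hpt : ∀ k : Fin n,
          v.1 (Sum.inr k) * u3 (Sum.inl k) - v.1 (Sum.inl k) * u3 (Sum.inr k) =
            (if k = (⟨0, by omega⟩ : Fin n) then -(v.1 (Sum.inl ⟨0, by omega⟩)) else 0) +
            (if k = (⟨n - 1, by omega⟩ : Fin n) then
              z (Sum.inl ⟨n - 1, by omega⟩) * z (Sum.inl ⟨n - 1, by omega⟩) *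
                v.1 (Sum.inl ⟨n - 1, by omega⟩) else 0) := by
        intro k
        by_cases hk0 : k = (⟨0, by omega⟩ : Fin n)
        · subst hk0
          simp only [hu3, Sum.inr.injEq, Sum.inl.injEq, Fin.mk.injEq, reduceCtorEq,
            E01, E10, eq_self_iff_true, if_true, if_false, ite_true, ite_false,
            if_neg hne]
          ring
        · by_cases hk1 : k = (⟨n - 1, by omega⟩ : Fin n)
          · subst hk1
            simp only [hu3, Sum.inr.injEq, Sum.inl.injEq, Fin.mk.injEq, reduceCtorEq,
              E01, E10, eq_self_iff_true, if_true, if_false, ite_true, ite_false,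
              if_neg hne.symm]
            ring
          · simp only [hu3, Sum.inr.injEq, Sum.inl.injEq, Fin.mk.injEq, reduceCtorEq,
              if_false, if_neg hk0, if_neg hk1]
            ring
      rw [sum_two _ _ hne _ _ _ hpt] at h0
      linarith
    -- conclude that v is a multiple of w0
    rw [Submodule.mem_span_singleton]
    refine ⟨v.1 (Sum.inl ⟨n - 1, by omega⟩), ?_⟩
    apply Subtype.ext
    have hsm : ∀ i, ((v.1 (Sum.inl ⟨n - 1, by omega⟩)) •
        (⟨w0 n hn z, w0_mem hn z h2 hb⟩ : LinearMap.ker (Lmap n hn z : Phase n →ₗ[ℝ] ℝ × ℝ × ℝ))).1 i =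
        v.1 (Sum.inl ⟨n - 1, by omega⟩) * w0 n hn z i := fun i => rfl
    funext i
    rw [hsm]
    rcases i with j | j <;> obtain ⟨jv, hjlt⟩ := j
    · by_cases hj0 : jv = 0
      · subst hj0
        simp only [w0, Sum.inl.injEq, Fin.mk.injEq, reduceCtorEq, eq_self_iff_true,
          if_true, ite_true]
        rw [hv0]; ring
      · by_cases hj1 : jv = n - 1
        · subst hj1
          simp only [w0, Sum.inl.injEq, Fin.mk.injEq, reduceCtorEq, E10,
            eq_self_iff_true, if_true, if_false, ite_true, ite_false]
          ring
        · by_cases hj2 : jv = n - 2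
          · subst hj2
            simp only [w0, Sum.inl.injEq, Fin.mk.injEq, reduceCtorEq, E20, E21,
              if_false, ite_false]
            rw [hvmem.2.1]; ring
          · simp only [w0, Sum.inl.injEq, Sum.inr.injEq, Fin.mk.injEq, reduceCtorEq,
              if_false, hj0, hj1, ite_false]
            rw [hvl ⟨jv, hjlt⟩ hj0 hj2 hj1]; ring
    · by_cases hj1 : jv = n - 1
      · subst hj1
        simp only [w0, Sum.inr.injEq, Sum.inl.injEq, Fin.mk.injEq, reduceCtorEq,
          eq_self_iff_true, if_true, if_false, ite_true, ite_false]
        have hvb : v.1 (Sum.inr ⟨0, by omega⟩) = 0 := hvr _ E02 E01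
        rw [hvmem.2.2, hvb]; ring
      · by_cases hj2 : jv = n - 2
        · subst hj2
          simp only [w0, Sum.inr.injEq, Sum.inl.injEq, Fin.mk.injEq, reduceCtorEq,
            E21, if_false, ite_false]
          rw [hvmem.1]; ring
        · simp only [w0, Sum.inr.injEq, Sum.inl.injEq, Fin.mk.injEq, reduceCtorEq,
            if_false, hj1, ite_false]
          rw [hvr ⟨jv, hjlt⟩ hj2 hj1]; ring
  · rw [Submodule.span_singleton_le_iff_mem, LinearMap.mem_ker]
    apply LinearMap.ext
    intro u
    simp only [LinearMap.compl₁₂_apply, Submodule.subtype_apply, LinearMap.zero_apply]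
    exact omega_w0 hn z h2 hb u.1 u.2

include hn h2 hb in
lemma w0_ne_zero :
    (⟨w0 n hn z, w0_mem hn z h2 hb⟩ : LinearMap.ker (Lmap n hn z : Phase n →ₗ[ℝ] ℝ × ℝ × ℝ)) ≠ 0 := by
  intro h
  have E10 : ¬((n - 1 : ℕ) = 0) := by omega
  have h' := congrFun (congrArg Subtype.val h) (Sum.inl ⟨n - 1, by omega⟩)
  simp only [w0, Sum.inl.injEq, Fin.mk.injEq, reduceCtorEq, E10, eq_self_iff_true,
    if_true, if_false, ite_true, ite_false, ZeroMemClass.coe_zero, Pi.zero_apply] at h'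
  exact one_ne_zero h'

include hn h2 hb in
lemma rank_part :
    Module.finrank ℝ (LinearMap.range ((sympForm n).compl₁₂
      (LinearMap.ker (fderiv ℝ
        (fun w : Phase n => ((p1 n hn w, p2 n hn w, p3 n hn w) : ℝ × ℝ × ℝ)) z :
          Phase n →ₗ[ℝ] ℝ × ℝ × ℝ)).subtype
      (LinearMap.ker (fderiv ℝ
        (fun w : Phase n => ((p1 n hn w, p2 n hn w, p3 n hn w) : ℝ × ℝ × ℝ)) z :
          Phase n →ₗ[ℝ] ℝ × ℝ × ℝ)).subtype)) =
    2 * n - 4 := by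
  rw [(hasFD_triple hn z).fderiv]
  have hrn := LinearMap.finrank_range_add_finrank_ker ((sympForm n).compl₁₂
    (LinearMap.ker (Lmap n hn z : Phase n →ₗ[ℝ] ℝ × ℝ × ℝ)).subtype (LinearMap.ker (Lmap n hn z : Phase n →ₗ[ℝ] ℝ × ℝ × ℝ)).subtype)
  rw [ker_B_eq hn z h2 hb, finrank_span_singleton (w0_ne_zero hn z h2 hb),
    finrank_ker_Lmap hn z h2 hb] at hrn
  omega

end main

/-- (i) the Poisson brackets `{p₁, p₃}` and `{p₂, p₃}` vanish identically
while `{p₁, p₂} = ξ₁`, which is nonvanishing on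
`Σ = {p₁ = p₂ = p₃ = 0, ξ₁ ≠ 0}`; (ii) at every point `z ∈ Σ`, the restriction of the
standard symplectic form to the tangent space `T_z Σ` (the kernel of the derivative of
the defining map `(p₁, p₂, p₃)`) has rank `2n - 4`. -/
theorem stmt_10 (n : ℕ) (hn : 4 ≤ n) :
    -- (i)
    (∀ z : Phase n,
      poissonBracket n (p1 n hn) (p3 n hn) z = 0 ∧
      poissonBracket n (p2 n hn) (p3 n hn) z = 0 ∧
      poissonBracket n (p1 n hn) (p2 n hn) z = z (Sum.inr ⟨0, by omega⟩)) ∧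
    (∀ z : Phase n,
      p1 n hn z = 0 → p2 n hn z = 0 → p3 n hn z = 0 → z (Sum.inr ⟨0, by omega⟩) ≠ 0 →
        poissonBracket n (p1 n hn) (p2 n hn) z ≠ 0) ∧
    -- (ii)
    (∀ z : Phase n,
      p1 n hn z = 0 → p2 n hn z = 0 → p3 n hn z = 0 → z (Sum.inr ⟨0, by omega⟩) ≠ 0 →
      (let T : Submodule ℝ (Phase n) :=
        LinearMap.ker ((fderiv ℝ
          (fun w : Phase n => ((p1 n hn w, p2 n hn w, p3 n hn w) : ℝ × ℝ × ℝ)) z :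
            Phase n →ₗ[ℝ] ℝ × ℝ × ℝ))
       Module.finrank ℝ
          (LinearMap.range ((sympForm n).compl₁₂ T.subtype T.subtype)) = 2 * n - 4)) := by
  refine ⟨fun z => ⟨br13 hn z, br23 hn z, br12 hn z⟩, fun z _ _ _ hb => ?_, ?_⟩
  · rw [br12 hn z]; exact hb
  · intro z h1 h2 h3 hb
    exact rank_part hn z h2 hb
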